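/- There exists a 2-factorization of the graph K_24 − I (the complete graph on 24 vertices minus a perfect matching I) having exactly 7 triangle-factors and 4 quadrangle-factors; i.e., the Hamilton–Waterloo problem HWP(24; 3, 4; 7, 4) has a solution. -/

import Mathlib

/-
A permutation `σ` of the vertices without fixed points and without 2-cycles is the successor map of
a 2-factor, the graph joining each `v` to `σ v`, whose components are the cycles of `σ`. So a
triangle- or quadrangle-factor is a permutation all of whose cycles have length 3 or 4, and the
conditions on such a factor become finite checks on the permutation.

On `ℤ₂₄` with `I = {v, v + 12}`, the four quadrangle-factors with cycles `(i, i+d, i+12, i+12+d)`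
for `i ≡ p (mod 2)`, `i < 12`, where `d ∈ {1, 5}` and `p ∈ {0, 1}`, use up the edges of differences
`±1, ±5, ±7, ±11`; the circulant graph of the remaining differences `±2, ±3, ±4, ±6, ±8, ±9, ±10`
splits into seven triangle-factors.
-/

/-- `H` is a 2-factor of the simple graph `G`: a spanning 2-regular subgraph of `G`
(every vertex has exactly two neighbours in `H`). -/
def IsTwoFactor {V : Type*} (G H : SimpleGraph V) : Prop :=
  H ≤ G ∧ ∀ v : V, (H.neighborSet v).ncard = 2

/-- `H` is a 2-factor of `G` all of whose connected components are cycles of length `n`: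
since `H` is 2-regular, this is equivalent to requiring that every connected component
of `H` has exactly `n` vertices. For `n = 3` this is a triangle-factor, for `n = 4` a
quadrangle-factor. -/
def IsCycleFactor {V : Type*} (G H : SimpleGraph V) (n : ℕ) : Prop :=
  IsTwoFactor G H ∧ ∀ v : V, (H.connectedComponentMk v).supp.ncard = n

/-- `F` is a solution of the Hamilton--Waterloo problem HWP on the graph `G` with `r`
triangle-factors and `s` quadrangle-factors: the `r + s` factors `F i` are 2-factors of `G`
whose edge sets partition the edge set of `G` (every edge of `G` lies in exactly one factor),
the first `r` of them being triangle-factors and the remaining `s` quadrangle-factors. -/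
def IsHWPSolution {V : Type*} (G : SimpleGraph V) (r s : ℕ)
    (F : Fin (r + s) → SimpleGraph V) : Prop :=
  (∀ i : Fin (r + s), (i : ℕ) < r → IsCycleFactor G (F i) 3) ∧
  (∀ i : Fin (r + s), r ≤ (i : ℕ) → IsCycleFactor G (F i) 4) ∧
  (∀ e : Sym2 V, e ∈ G.edgeSet → ∃! i : Fin (r + s), e ∈ (F i).edgeSet)

open Equiv Function

theorem Function.minimalPeriod_eq_of_iterate_eq {α : Type*} {f : α → α} {x : α} {n : ℕ}
    (hn : 0 < n) (hper : f^[n] x = x) (hmin : ∀ k < n, 0 < k → f^[k] x ≠ x) :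
    minimalPeriod f x = n := by
  have hpos : 0 < minimalPeriod f x := minimalPeriod_pos_of_mem_periodicPts ⟨n, hn, hper⟩
  by_contra hne
  exact hmin _ ((IsPeriodicPt.minimalPeriod_le hn hper).lt_of_ne hne) hpos
    (isPeriodicPt_minimalPeriod f x)

theorem Equiv.Perm.ncard_setOf_sameCycle {V : Type*} [Finite V] (σ : Perm V) (v : V) :
    {b | σ.SameCycle v b}.ncard = minimalPeriod σ v := by
  have hpos : 0 < minimalPeriod σ v :=
    minimalPeriod_pos_of_mem_periodicPts (σ.injective.mem_periodicPts v)
  have horbit : {b | σ.SameCycle v b} = (σ^[·] v) '' Set.Iio (minimalPeriod σ v) := by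
    ext b
    constructor
    · intro h
      obtain ⟨k, rfl⟩ := h.exists_nat_pow_eq
      refine ⟨k % minimalPeriod σ v, Nat.mod_lt _ hpos, ?_⟩
      dsimp only
      rw [iterate_mod_minimalPeriod_eq, Perm.coe_pow]
    · rintro ⟨k, -, rfl⟩
      exact ⟨k, by rw [zpow_natCast, Perm.coe_pow]⟩
  rw [horbit, iterate_injOn_Iio_minimalPeriod.ncard_image, Set.ncard_Iio_nat]

namespace SimpleGraph

variable {V : Type*}

def ofPerm (σ : Perm V) : SimpleGraph V := fromRel fun a b => b = σ a

instance [DecidableEq V] (σ : Perm V) : DecidableRel (ofPerm σ).Adj :=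
  fun a b => decidable_of_iff' _ (fromRel_adj _ a b)

section

variable (σ : Perm V)

theorem ofPerm_adj {a b : V} : (ofPerm σ).Adj a b ↔ a ≠ b ∧ (b = σ a ∨ a = σ b) :=
  fromRel_adj _ a b

theorem neighborSet_ofPerm {v : V} (hv : σ v ≠ v) :
    (ofPerm σ).neighborSet v = {σ v, σ.symm v} := by
  ext b
  simp only [mem_neighborSet, ofPerm_adj, Set.mem_insert_iff, Set.mem_singleton_iff,
    eq_symm_apply]
  constructor
  · rintro ⟨-, h | h⟩
    exacts [Or.inl h, Or.inr h.symm]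
  · rintro (rfl | rfl)
    exacts [⟨hv.symm, Or.inl rfl⟩, ⟨fun h => hv (congrArg σ h), Or.inr rfl⟩]

theorem ncard_neighborSet_ofPerm_eq_one {v : V} (hv : σ v ≠ v) (hinv : σ (σ v) = v) :
    ((ofPerm σ).neighborSet v).ncard = 1 := by
  rw [neighborSet_ofPerm σ hv, σ.symm_apply_eq.2 hinv.symm, Set.pair_eq_singleton,
    Set.ncard_singleton]

theorem ncard_neighborSet_ofPerm_eq_two {v : V} (hv : σ v ≠ v) (h2 : σ (σ v) ≠ v) :
    ((ofPerm σ).neighborSet v).ncard = 2 := by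
  rw [neighborSet_ofPerm σ hv, Set.ncard_pair]
  rwa [Ne, σ.eq_symm_apply]

theorem reachable_ofPerm_apply (a : V) : (ofPerm σ).Reachable a (σ a) := by
  by_cases h : σ a = a
  · rw [h]
  · exact Adj.reachable ((ofPerm_adj σ).2 ⟨Ne.symm h, Or.inl rfl⟩)

theorem reachable_ofPerm_iff {a b : V} : (ofPerm σ).Reachable a b ↔ σ.SameCycle a b := by
  constructor
  · rintro ⟨w⟩
    induction w with
    | nil => exact Perm.SameCycle.refl _ _
    | cons h _ ih =>
      obtain ⟨-, rfl | rfl⟩ := (ofPerm_adj σ).1 h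
      exacts [Perm.sameCycle_apply_left.1 ih, Perm.sameCycle_apply_left.2 ih]
  · rintro ⟨k, rfl⟩
    induction k using Int.induction_on with
    | zero => rfl
    | succ k ih =>
      rw [add_comm, zpow_add, zpow_one, Perm.mul_apply]
      exact ih.trans (reachable_ofPerm_apply σ _)
    | pred k ih =>
      rw [sub_eq_neg_add, zpow_add, zpow_neg_one, Perm.mul_apply]
      refine ih.trans (Reachable.symm ?_)
      simpa using reachable_ofPerm_apply σ (σ⁻¹ ((σ ^ (-(k : ℤ))) a))

theorem supp_connectedComponentMk_ofPerm (v : V) :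
    ((ofPerm σ).connectedComponentMk v).supp = {b | σ.SameCycle v b} := by
  ext b
  rw [ConnectedComponent.mem_supp_iff, ConnectedComponent.eq, Set.mem_ofPred_eq,
    reachable_ofPerm_iff, Perm.sameCycle_comm]

end

theorem isCycleFactor_ofPerm [Finite V] {G : SimpleGraph V} {σ : Perm V} {n : ℕ} (hn : 3 ≤ n)
    (hG : ∀ v, G.Adj v (σ v)) (hper : ∀ v, σ^[n] v = v)
    (hmin : ∀ v, ∀ k < n, 0 < k → σ^[k] v ≠ v) :
    IsCycleFactor G (ofPerm σ) n := by
  refine ⟨⟨fun a b h => ?_, fun v => ?_⟩, fun v => ?_⟩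
  · obtain ⟨-, rfl | rfl⟩ := (ofPerm_adj σ).1 h
    exacts [hG a, (hG b).symm]
  · exact ncard_neighborSet_ofPerm_eq_two σ (hmin v 1 (by omega) one_pos)
      (hmin v 2 (by omega) two_pos)
  · rw [supp_connectedComponentMk_ofPerm, Perm.ncard_setOf_sameCycle,
      minimalPeriod_eq_of_iterate_eq (by omega) (hper v) (hmin v)]

end SimpleGraph

theorem isHWPSolution_append {V : Type*} {G : SimpleGraph V} {r s : ℕ} {T : Fin r → SimpleGraph V}
    {Q : Fin s → SimpleGraph V} (hT : ∀ i, IsCycleFactor G (T i) 3)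
    (hQ : ∀ j, IsCycleFactor G (Q j) 4)
    (hpart : ∀ a b, G.Adj a b → ∃! i, (Fin.append T Q i).Adj a b) :
    IsHWPSolution G r s (Fin.append T Q) := by
  refine ⟨fun i hi => ?_, fun i hi => ?_, Sym2.ind fun a b hab => hpart a b hab⟩
  · rw [show i = Fin.castAdd s ⟨i, hi⟩ from rfl, Fin.append_left]
    exact hT _
  · rw [show i = Fin.natAdd r ⟨i - r, by omega⟩ from Fin.ext (by simp; omega), Fin.append_right]
    exact hQ _

namespace HWP24

open SimpleGraph

-- found by a SAT solver
def trianglePerm : Fin 7 → Perm (Fin 24) :=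
  ![c[0, 2, 10] * c[1, 9, 17] * c[3, 11, 19] * c[4, 8, 18] * c[5, 13, 21] * c[6, 16, 20] *
      c[7, 15, 23] * c[12, 14, 22],
    c[0, 3, 18] * c[1, 21, 23] * c[2, 17, 20] * c[4, 10, 19] * c[5, 8, 14] * c[6, 12, 15] *
      c[7, 16, 22] * c[9, 11, 13],
    c[0, 4, 14] * c[1, 16, 19] * c[2, 18, 22] * c[3, 6, 9] * c[5, 20, 23] * c[7, 11, 21] *
      c[8, 10, 12] * c[13, 15, 17],
    c[0, 6, 21] * c[1, 4, 22] * c[2, 8, 23] * c[3, 7, 17] * c[5, 15, 19] * c[9, 12, 18] *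
      c[10, 13, 16] * c[11, 14, 20],
    c[0, 8, 16] * c[1, 11, 15] * c[2, 4, 6] * c[3, 12, 21] * c[5, 7, 9] * c[10, 18, 20] *
      c[13, 19, 22] * c[14, 17, 23],
    c[0, 9, 15] * c[1, 7, 10] * c[2, 5, 11] * c[3, 13, 23] * c[4, 12, 20] * c[6, 8, 22] *
      c[14, 16, 18] * c[17, 19, 21],
    c[0, 20, 22] * c[1, 3, 5] * c[2, 12, 16] * c[4, 7, 13] * c[6, 10, 14] * c[8, 11, 17] *
      c[9, 19, 23] * c[15, 18, 21]]

def quadranglePerm (d p : Fin 24) : Perm (Fin 24) :=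
  (([0, 2, 4, 6, 8, 10] : List (Fin 24)).map fun i =>
    List.formPerm [i + p, i + p + d, i + p + 12, i + p + 12 + d]).prod

def quadranglePerms : Fin 4 → Perm (Fin 24) :=
  ![quadranglePerm 1 0, quadranglePerm 1 1, quadranglePerm 5 0, quadranglePerm 5 1]

def matching : Perm (Fin 24) := Equiv.addRight 12

abbrev completeMinusMatching : SimpleGraph (Fin 24) := ⊤ \ ofPerm matching

def factor : Fin (7 + 4) → SimpleGraph (Fin 24) :=
  Fin.append (fun i => ofPerm (trianglePerm i)) (fun j => ofPerm (quadranglePerms j))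

theorem ncard_neighborSet_matching (v : Fin 24) : ((ofPerm matching).neighborSet v).ncard = 1 :=
  ncard_neighborSet_ofPerm_eq_one matching (by revert v; decide) (by revert v; decide)

set_option maxRecDepth 10000 in
theorem isCycleFactor_trianglePerm (i : Fin 7) :
    IsCycleFactor completeMinusMatching (ofPerm (trianglePerm i)) 3 :=
  isCycleFactor_ofPerm le_rfl (by revert i; decide) (by revert i; decide) (by revert i; decide)

set_option maxRecDepth 10000 in
theorem isCycleFactor_quadranglePerms (j : Fin 4) :
    IsCycleFactor completeMinusMatching (ofPerm (quadranglePerms j)) 4 :=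
  isCycleFactor_ofPerm (by norm_num) (by revert j; decide) (by revert j; decide)
    (by revert j; decide)

set_option maxRecDepth 10000 in
theorem existsUnique_factor_adj :
    ∀ a b, completeMinusMatching.Adj a b → ∃! i, (factor i).Adj a b := by
  have hfactor : factor = fun i => ofPerm (Fin.append trianglePerm quadranglePerms i) :=
    funext (Fin.addCases (by simp [factor]) (by simp [factor]))
  simp only [hfactor, Fintype.existsUnique_iff_card_one]
  decide

end HWP24

/-- HWP(24; 3, 4; 7, 4) has a solution: the complete graph `K_24` minus a perfect matching
`I` admits a 2-factorization with exactly 7 triangle-factors and 4 quadrangle-factors. -/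
theorem hwp24_7_4 :
    ∃ M : SimpleGraph (Fin 24), (∀ v : Fin 24, (M.neighborSet v).ncard = 1) ∧
      ∃ F : Fin (7 + 4) → SimpleGraph (Fin 24),
        IsHWPSolution ((⊤ : SimpleGraph (Fin 24)) \ M) 7 4 F :=
  ⟨.ofPerm HWP24.matching, HWP24.ncard_neighborSet_matching, HWP24.factor,
    isHWPSolution_append HWP24.isCycleFactor_trianglePerm HWP24.isCycleFactor_quadranglePerms
      HWP24.existsUnique_factor_adj⟩
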